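/- arXiv:1811.06430 — 2 statements merged into one kernel-verified Lean document; each statement's English description precedes it below -/
import Mathlib

section
/- Strict upper bounds for ascending chains of stable kernels (diagonal argument underlying the lemma on maximal test limit groups): Let Γ be a group and G a finitely generated group. For each i ∈ ℕ let (φ^i_n)_{n∈ℕ} be a stable sequence of homomorphisms G → Γ with stable kernel K_i, and assume K_i ⊊ K_{i+1} for all i (a strictly ascending chain). Then there exists a choice of indices n(i) ∈ ℕ such that the diagonal sequence (φ^i_{n(i)})_{i∈ℕ} is a stable sequence of homomorphisms G → Γ whose stable kernel K strictly contains K_i for every i ∈ ℕ. -/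
/-!
Since each sequence `φ i` is stable, for every `g` the value `φ i n g = 1` eventually (in `n`)
says exactly whether `g ∈ K i`. As `G` is finitely generated, hence countable, a diagonal
choice `n(i)` makes this hold simultaneously for the first `i` elements of an enumeration of
`G`, so for each fixed `g` the diagonal sequence eventually detects membership in `K i`.
Because the `K i` increase, that membership stabilises to membership in `⋃ i, K i`; hence the
diagonal sequence is stable with stable kernel `⋃ i, K i`, which strictly contains each
`K i ⊂ K (i + 1)`.
-/

open Filter

theorem Group.countable_of_fg (G : Type*) [Group G] [Group.FG G] : Countable G := by
  obtain ⟨S, hS, f, hf⟩ := Group.fg_iff_exists_freeGroup_hom_surjective.mp ‹Group.FG G›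
  have : Finite S := hS.to_subtype
  exact hf.countable

section Eventually

variable {ι : Type*} {l : Filter ι} {p : ι → Prop}

theorem Filter.eventually_iff_eventually_of_or [l.NeBot]
    (h : (∀ᶠ i in l, p i) ∨ ∀ᶠ i in l, ¬ p i) : ∀ᶠ i in l, p i ↔ ∀ᶠ j in l, p j := by
  rcases h with h | h
  · filter_upwards [h] with i hi using iff_of_true hi h
  · filter_upwards [h] with i hi using
      iff_of_false hi fun h' => (h'.and h).exists.elim fun _ hj => hj.2 hj.1

theorem Filter.eventually_or_eventually_not_of_eventually_iff {q : Prop}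
    (h : ∀ᶠ i in l, p i ↔ q) : (∀ᶠ i in l, p i) ∨ ∀ᶠ i in l, ¬ p i := by
  by_cases hq : q
  · exact .inl (h.mono fun _ hi => hi.mpr hq)
  · exact .inr (h.mono fun _ hi => mt hi.mp hq)

theorem Filter.exists_diagonal_eventually [l.NeBot] {α : Type*} [Countable α] [Nonempty α]
    {P : ℕ → ι → α → Prop} (h : ∀ i a, ∀ᶠ n in l, P i n a) :
    ∃ nsel : ℕ → ι, ∀ a, ∀ᶠ i in atTop, P i (nsel i) a := by
  obtain ⟨e, he⟩ := exists_surjective_nat α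
  have hfinite : ∀ i, ∃ n, ∀ k ∈ Set.Iic i, P i n (e k) := fun i =>
    ((eventually_all_finite (Set.finite_Iic i)).2 fun k _ => h i (e k)).exists
  choose nsel hnsel using hfinite
  refine ⟨nsel, fun a => ?_⟩
  obtain ⟨k, rfl⟩ := he a
  filter_upwards [eventually_ge_atTop k] with i hi using hnsel i k hi

end Eventually

theorem Monotone.eventually_mem_iff_mem_iUnion {ι α : Type*} [Preorder ι] {K : ι → Set α}
    (hK : Monotone K) (a : α) : ∀ᶠ i in atTop, a ∈ K i ↔ a ∈ ⋃ j, K j := by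
  by_cases ha : a ∈ ⋃ j, K j
  · obtain ⟨j, hj⟩ := Set.mem_iUnion.mp ha
    filter_upwards [eventually_ge_atTop j] with i hi using iff_of_true (hK hi hj) ha
  · exact .of_forall fun i => iff_of_false (fun hi => ha (Set.mem_iUnion_of_mem i hi)) ha

/-- **Strict upper bounds for ascending chains of stable kernels** (diagonal argument behind
the lemma on maximal test limit groups).  Let `G` be finitely generated and for each `i` let
`(φ i n)_n` be a stable sequence of homomorphisms `G → Γ` whose stable kernels
`K i = {g ∣ φ i n g = 1 for n large}` form a strictly ascending chain.  Then there is a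
choice of indices `nsel : ℕ → ℕ` so that the diagonal sequence `(φ i (nsel i))_i` is stable
and its stable kernel strictly contains every `K i`. -/
theorem diagonal_stable_kernel (G Γ : Type) [Group G] [Group Γ] [Group.FG G]
    (φ : ℕ → ℕ → (G →* Γ))
    (hstable : ∀ i (g : G), (∀ᶠ n in Filter.atTop, φ i n g = 1) ∨
      (∀ᶠ n in Filter.atTop, φ i n g ≠ 1))
    (hchain : ∀ i, {g : G | ∀ᶠ n in Filter.atTop, φ i n g = 1} ⊂
      {g : G | ∀ᶠ n in Filter.atTop, φ (i + 1) n g = 1}) :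
    ∃ nsel : ℕ → ℕ,
      (∀ g : G, (∀ᶠ i in Filter.atTop, φ i (nsel i) g = 1) ∨
        (∀ᶠ i in Filter.atTop, φ i (nsel i) g ≠ 1)) ∧
      ∀ i, {g : G | ∀ᶠ n in Filter.atTop, φ i n g = 1} ⊂
        {g : G | ∀ᶠ j in Filter.atTop, φ j (nsel j) g = 1} := by
  set K : ℕ → Set G := fun i => {g | ∀ᶠ n in atTop, φ i n g = 1}
  have hK : Monotone K := monotone_nat_of_le_succ fun i => (hchain i).subset
  have := Group.countable_of_fg G
  obtain ⟨nsel, hnsel⟩ := exists_diagonal_eventually fun i g =>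
    eventually_iff_eventually_of_or (hstable i g)
  have hlim : ∀ g, ∀ᶠ i in atTop, φ i (nsel i) g = 1 ↔ g ∈ ⋃ j, K j := fun g =>
    ((hnsel g).and (hK.eventually_mem_iff_mem_iUnion g)).mono fun _ h => h.1.trans h.2
  have hker : {g | ∀ᶠ j in atTop, φ j (nsel j) g = 1} = ⋃ j, K j :=
    Set.ext fun g => (eventually_congr (hlim g)).trans eventually_const
  refine ⟨nsel, fun g => eventually_or_eventually_not_of_eventually_iff (hlim g), fun i => ?_⟩
  rw [hker]
  exact (hchain i).trans_subset (Set.subset_iUnion K (i + 1))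
end

section
/- Small cancellation property of the test words: For every integer N ≥ 1 let W_N be the word x y x y² x y³ ⋯ x y^N x over the two-letter alphabet {x, y}, i.e. the list obtained by concatenating, for j = 1, …, N, the letter x followed by j copies of y, and then appending a final letter x. If a word u occurs as a contiguous subword (factor) of W_N at two distinct starting positions, then the length of u is at most 2N. (Since the length of W_N grows quadratically in N, this shows that the family of words w_n = x y x y² ⋯ x y^{N(n)} x with N(n) ≥ n·L(n) satisfies the small cancellation condition C′(1/n) used in the construction of test sequences.) -/
/-!
The letters `x` of `W_N` sit at positions `xPos 0 < ⋯ < xPos N`, the `k`-th and `(k+1)`-st being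
`k + 2` apart, so each block `x y^(k+1) x` occurs in `W_N` only once. If a factor starts at `i`
and the first `x` at or after `i` is the `k`-th, it lies at distance at most `k` from `i`. Either
`k = N` and the factor has length at most `N + 1`, or a factor longer than `2N` contains the whole
block `x y^(k+1) x` at that offset, and the block's unique position determines `i`.
-/

/-- The word `W_N = x y x y² x y³ ⋯ x y^N x` over the two-letter alphabet `{x, y}`,
encoded as a list of booleans with `true = x` and `false = y`. -/
def testWord (N : ℕ) : List Bool :=
  ((List.range N).flatMap fun j => true :: List.replicate (j + 1) false) ++ [true]

/-- `xPos k` is the position of the `k`-th letter `x` (counting from `0`) in every `testWord N`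
with `k ≤ N`. -/
def xPos : ℕ → ℕ
  | 0 => 0
  | k + 1 => xPos k + k + 2

lemma xPos_succ (k : ℕ) : xPos (k + 1) = xPos k + k + 2 := rfl

lemma xPos_strictMono : StrictMono xPos :=
  strictMono_nat_of_lt_succ fun k => by rw [xPos_succ]; omega

lemma not_exists_xPos_eq_of_lt_of_lt {k n : ℕ} (h₁ : xPos k < n) (h₂ : n < xPos (k + 1)) :
    ¬ ∃ m, xPos m = n := by
  rintro ⟨m, rfl⟩
  have := xPos_strictMono.lt_iff_lt.mp h₁
  have := xPos_strictMono.lt_iff_lt.mp h₂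
  omega

lemma exists_xPos_mem_Icc {N i : ℕ} (h : i ≤ xPos N) : ∃ k ≤ N, i ≤ xPos k ∧ xPos k ≤ i + k := by
  induction N with
  | zero => exact ⟨0, le_rfl, h, by simp [xPos]⟩
  | succ N ih =>
    by_cases hi : i ≤ xPos N
    · obtain ⟨k, hk, hk'⟩ := ih hi
      exact ⟨k, by omega, hk'⟩
    · exact ⟨N + 1, le_rfl, h, by rw [xPos_succ] at h ⊢; omega⟩

/-- The gaps between consecutive `x`'s grow strictly, so a gap of length `k + 2` is the `k`-th. -/
lemma eq_xPos_of_gap {q k : ℕ} (h₀ : ∃ m, xPos m = q)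
    (hgap : ∀ s, 1 ≤ s → s ≤ k + 1 → ¬ ∃ m, xPos m = q + s) (h₁ : ∃ m, xPos m = q + (k + 2)) :
    q = xPos k := by
  obtain ⟨m, rfl⟩ := h₀
  obtain ⟨m', hm'⟩ := h₁
  have hlt : m < m' := xPos_strictMono.lt_iff_lt.mp (by omega)
  have hle : xPos (m + 1) ≤ xPos m' := xPos_strictMono.monotone hlt
  rw [xPos_succ] at hle
  obtain rfl | hmk : m = k ∨ m < k := by omega
  · rfl
  · exact absurd ⟨m + 1, by rw [xPos_succ]; omega⟩ (hgap (m + 2) (by omega) (by omega))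

lemma testWord_succ (N : ℕ) :
    testWord (N + 1) = testWord N ++ (List.replicate (N + 1) false ++ [true]) := by
  simp [testWord, List.range_succ, List.flatMap_append]

lemma testWord_length (N : ℕ) : (testWord N).length = xPos N + 1 := by
  induction N with
  | zero => simp [testWord, xPos]
  | succ N ih => simp [testWord_succ, ih, xPos_succ]; omega

lemma testWord_getElem_eq_true_iff {N n : ℕ} (h : n < (testWord N).length) :
    (testWord N)[n] = true ↔ ∃ k, xPos k = n := by
  induction N with
  | zero =>
    simp only [testWord_length, xPos] at h
    simpa [testWord, show n = 0 by omega] using ⟨0, rfl⟩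
  | succ N ih =>
    have hlen := testWord_length N
    rw [testWord_length, xPos_succ] at h
    simp only [List.getElem_of_eq (testWord_succ N), List.getElem_append, List.getElem_replicate,
      List.length_replicate, hlen]
    split_ifs with h₁ h₂
    · exact ih _
    · simpa using not_exists_xPos_eq_of_lt_of_lt (k := N) (by omega) (by rw [xPos_succ]; omega)
    · simp only [List.getElem_singleton, true_iff]
      exact ⟨N + 1, by rw [xPos_succ]; omega⟩

section
variable {α : Type*} {l u : List α} {i t : ℕ}

lemma List.add_lt_length_of_isPrefix_drop (h : u <+: l.drop i) (ht : t < u.length) :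
    i + t < l.length := by
  have := h.length_le
  rw [List.length_drop] at this
  omega

lemma List.getElem_eq_of_isPrefix_drop (h : u <+: l.drop i) (ht : t < u.length) :
    l[i + t]'(List.add_lt_length_of_isPrefix_drop h ht) = u[t] := by
  rw [h.getElem ht, List.getElem_drop]

end

lemma eq_of_forall_exists_xPos_add_iff {N len i j : ℕ} (hN : 1 ≤ N) (hlen : 2 * N < len)
    (hi : i + len ≤ xPos N + 1) (hij : ∀ t < len, (∃ k, xPos k = i + t) ↔ ∃ k, xPos k = j + t) :
    i = j := by
  obtain ⟨k, hkN, hik, hki⟩ := exists_xPos_mem_Icc (N := N) (i := i) (by omega)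
  obtain rfl | hkN : k = N ∨ k + 1 ≤ N := by omega
  · omega
  obtain ⟨a, ha⟩ : ∃ a, xPos k = i + a := ⟨xPos k - i, by omega⟩
  have hblock : xPos (k + 1) = i + (a + (k + 2)) := by rw [xPos_succ]; omega
  suffices j + a = xPos k by omega
  refine eq_xPos_of_gap ((hij a (by omega)).mp ⟨k, ha⟩) (fun s hs₁ hs₂ => ?_) ?_
  · rw [add_assoc, ← hij (a + s) (by omega), ← add_assoc]
    exact not_exists_xPos_eq_of_lt_of_lt (k := k) (by omega) (by omega)
  · rw [add_assoc, ← hij _ (by omega)]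
    exact ⟨k + 1, hblock⟩

/-- **Small cancellation property of the test words.** If a word `u` occurs as a contiguous
subword (factor) of `W_N = x y x y² ⋯ x y^N x` at two distinct starting positions, then
`u` has length at most `2N`.  (Since `|W_N|` grows quadratically in `N`, the test words
`w_n = x y x y² ⋯ x y^{N(n)} x` with `N(n) ≥ n·L(n)` satisfy `C′(1/n)`.) -/
theorem testWord_small_cancellation (N : ℕ) (hN : 1 ≤ N) (u : List Bool) (i j : ℕ)
    (hij : i ≠ j) (hi : u <+: (testWord N).drop i) (hj : u <+: (testWord N).drop j) :
    u.length ≤ 2 * N := by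
  by_contra! hlen
  have hi_le : i + u.length ≤ xPos N + 1 := by
    have := List.add_lt_length_of_isPrefix_drop hi (t := u.length - 1) (by omega)
    rw [testWord_length] at this
    omega
  refine hij (eq_of_forall_exists_xPos_add_iff hN hlen hi_le fun t ht => ?_)
  rw [← testWord_getElem_eq_true_iff (List.add_lt_length_of_isPrefix_drop hi ht),
    ← testWord_getElem_eq_true_iff (List.add_lt_length_of_isPrefix_drop hj ht),
    List.getElem_eq_of_isPrefix_drop hi ht, List.getElem_eq_of_isPrefix_drop hj ht]
end
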